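/- Let T>0, E a Banach space, {R^{(λ)}}_{λ∈[0,1]} a continuous family of evolution systems on E, and define Σ : E × L¹([0,T],E) × [0,1] → C([0,T],E) by Σ(x,w,λ)(t) := R^{(λ)}(t,0)x + ∫_0^t R^{(λ)}(t,s) w(s) ds. If K⊂E is relatively compact and W⊂L¹([0,T],E) is such that there exists c∈L¹([0,T],ℝ) with ‖w(t)‖≤c(t) for every w∈W and almost every t∈[0,T], then the set Σ(K×W×[0,1]) is relatively compact in C([0,T],E) if and only if for every t∈[0,T] the set {u(t) : u∈Σ(K×W×[0,1])} is relatively compact in E. -/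

import Mathlib

/-!
The forward implication holds because evaluation at `t` is continuous on `C([0,T], E)`. The
converse is Arzelà–Ascoli, and its content is the equicontinuity of `Σ(K × W × [0,1])`.
Continuity of the family makes `(λ, t, s) ↦ R^{(λ)}(t,s) y` continuous on the compact set
`[0,1] × {0 ≤ s ≤ t ≤ T}`, so by Banach–Steinhaus the operators are bounded by some `M`, and
`(λ, t, s, y) ↦ R^{(λ)}(t,s) y` is jointly continuous, hence uniformly continuous on compact sets.
Near `t₀` every value is written as `Σ(t) = R(t,a) Σ(a) + ∫_a^t R(t,s) w(s) ds` for one time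
`a ≤ t₀` close to `t₀`: since `Σ(a)` ranges over a relatively compact set, the first term moves
little uniformly, and the second is at most `M ∫_a^t c`.
-/

open Filter Topology Set MeasureTheory

noncomputable section

variable {E : Type*} [NormedAddCommGroup E] [NormedSpace ℝ E]

/-- An evolution system `{R(t,s)}_{0 ≤ s ≤ t ≤ T}` on `E`. -/
structure IsEvolutionSystem (T : ℝ) (R : ℝ → ℝ → E →L[ℝ] E) : Prop where
  refl : ∀ t ∈ Icc (0 : ℝ) T, R t t = 1
  comp : ∀ ⦃s r t : ℝ⦄, 0 ≤ s → s ≤ r → r ≤ t → t ≤ T → R t s = (R t r).comp (R r s)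
  strong_cont : ∀ x : E, ContinuousOn (fun p : ℝ × ℝ => R p.1 p.2 x)
    {p : ℝ × ℝ | 0 ≤ p.2 ∧ p.2 ≤ p.1 ∧ p.1 ≤ T}

/-- The parameter domain `{(t,s) : 0 ≤ s ≤ t ≤ T}` of an evolution system. -/
def evolDomain (T : ℝ) : Set (ℝ × ℝ) := {p : ℝ × ℝ | 0 ≤ p.2 ∧ p.2 ≤ p.1 ∧ p.1 ≤ T}

/-- A family `{R^{(λ)}}_{λ∈[0,1]}` of evolution systems is continuous: for every `x ∈ E`
and every sequence `λₙ → λ₀` in `[0,1]`, `R^{(λₙ)}(t,s)x → R^{(λ₀)}(t,s)x` uniformly in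
`0 ≤ s ≤ t ≤ T`. -/
def IsContinuousEvolFamily (T : ℝ) (R : ℝ → ℝ → ℝ → E →L[ℝ] E) : Prop :=
  ∀ (x : E) (l : ℕ → ℝ) (l0 : ℝ), (∀ n, l n ∈ Icc (0 : ℝ) 1) → l0 ∈ Icc (0 : ℝ) 1 →
    Tendsto l atTop (𝓝 l0) →
    TendstoUniformlyOn (fun n p => R (l n) p.1 p.2 x) (fun p => R l0 p.1 p.2 x)
      atTop (evolDomain T)

/-- The map `Σ(x,w,λ)(t) = R^{(λ)}(t,0)x + ∫₀ᵗ R^{(λ)}(t,s) w(s) ds`. -/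
def evolMap (R : ℝ → ℝ → E →L[ℝ] E) (x : E) (w : ℝ → E) (t : ℝ) : E :=
  R t 0 x + ∫ s in (0 : ℝ)..t, R t s (w s)

/-- The Hausdorff measure of noncompactness of a set `Q`. -/
def hausdorffMNC (Q : Set E) : ℝ :=
  sInf {r : ℝ | 0 < r ∧ ∃ c : Finset E, Q ⊆ ⋃ y ∈ c, Metric.ball y r}

theorem isCompact_evolDomain (T : ℝ) : IsCompact (evolDomain T) := by
  refine (isCompact_Icc.prod isCompact_Icc : IsCompact (Icc 0 T ×ˢ Icc 0 T)).of_isClosed_subset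
    ((isClosed_le continuous_const continuous_snd).inter ((isClosed_le continuous_snd
      continuous_fst).inter (isClosed_le continuous_fst continuous_const))) ?_
  rintro ⟨t, s⟩ ⟨hs, hst, htT⟩
  exact ⟨⟨hs.trans hst, htT⟩, hs, hst.trans htT⟩

section OperatorFamily

variable {X 𝕜 F G : Type*} [NontriviallyNormedField 𝕜] [NormedAddCommGroup F] [NormedSpace 𝕜 F]
  [NormedAddCommGroup G] [NormedSpace 𝕜 G] {A : X → F →L[𝕜] G} {s : Set X} {M : ℝ}

theorem IsCompact.exists_norm_le_of_continuousOn_apply [TopologicalSpace X] [CompleteSpace F]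
    (hs : IsCompact s) (hA : ∀ y, ContinuousOn (fun x => A x y) s) :
    ∃ M, ∀ x ∈ s, ‖A x‖ ≤ M := by
  obtain ⟨M, hM⟩ := banach_steinhaus (g := fun x : s => A x) fun y =>
    (hs.exists_bound_of_continuousOn (hA y)).imp fun C hC x => hC x x.2
  exact ⟨M, fun x hx => hM ⟨x, hx⟩⟩

theorem continuousOn_clm_apply_of_norm_le [TopologicalSpace X]
    (hA : ∀ y, ContinuousOn (fun x => A x y) s) (hM : ∀ x ∈ s, ‖A x‖ ≤ M) :
    ContinuousOn (fun q : X × F => A q.1 q.2) (s ×ˢ univ) := by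
  rintro ⟨x₀, y₀⟩ ⟨hx₀, -⟩
  have hfst : Tendsto Prod.fst (𝓝[s ×ˢ univ] (x₀, y₀)) (𝓝[s] x₀) := by
    rw [nhdsWithin_prod_eq]
    exact tendsto_fst
  have hsnd : Tendsto Prod.snd (𝓝[s ×ˢ univ] (x₀, y₀)) (𝓝 y₀) :=
    continuous_snd.continuousWithinAt
  have hlim : Tendsto (fun q : X × F => M * ‖q.2 - y₀‖ + ‖A q.1 y₀ - A x₀ y₀‖)
      (𝓝[s ×ˢ univ] (x₀, y₀)) (𝓝 0) := by
    simpa using ((tendsto_iff_norm_sub_tendsto_zero.1 hsnd).const_mul M).add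
      (tendsto_iff_norm_sub_tendsto_zero.1 ((hA y₀ x₀ hx₀).tendsto.comp hfst))
  rw [ContinuousWithinAt, tendsto_iff_norm_sub_tendsto_zero]
  refine squeeze_zero' (Eventually.of_forall fun _ => norm_nonneg _) ?_ hlim
  filter_upwards [self_mem_nhdsWithin] with q hq
  calc ‖A q.1 q.2 - A x₀ y₀‖ = ‖A q.1 (q.2 - y₀) + (A q.1 y₀ - A x₀ y₀)‖ := by
        rw [map_sub]; abel_nf
    _ ≤ M * ‖q.2 - y₀‖ + ‖A q.1 y₀ - A x₀ y₀‖ :=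
        (norm_add_le _ _).trans (by gcongr; exact (A q.1).le_of_opNorm_le (hM _ hq.1) _)

theorem IsCompact.exists_forall_dist_clm_apply_lt [PseudoMetricSpace X] (hs : IsCompact s)
    (hA : ∀ y, ContinuousOn (fun x => A x y) s) (hM : ∀ x ∈ s, ‖A x‖ ≤ M) {Q : Set F}
    (hQ : IsCompact Q) {ε : ℝ} (hε : 0 < ε) :
    ∃ δ > 0, ∀ x ∈ s, ∀ x' ∈ s, dist x x' < δ → ∀ y ∈ Q, dist (A x y) (A x' y) < ε := by
  have hunif := (hs.prod hQ).uniformContinuousOn_of_continuous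
    ((continuousOn_clm_apply_of_norm_le hA hM).mono (prod_mono le_rfl (subset_univ Q)))
  obtain ⟨δ, hδ, h⟩ := Metric.uniformContinuousOn_iff.1 hunif ε hε
  refine ⟨δ, hδ, fun x hx x' hx' hxx' y hy => h (x, y) ⟨hx, hy⟩ (x', y) ⟨hx', hy⟩ ?_⟩
  simpa [Prod.dist_eq] using hxx'

end OperatorFamily

theorem ContinuousMap.isCompact_closure_of_equicontinuous {X α : Type*} [TopologicalSpace X]
    [CompactlyCoherentSpace X] [UniformSpace α] [T2Space α] {S : Set C(X, α)}
    (hS : Equicontinuous fun f : S => (f : X → α))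
    (hpt : ∀ x, ∃ Q, IsCompact Q ∧ ∀ f ∈ S, f x ∈ Q) : IsCompact (closure S) := by
  refine ArzelaAscoli.isCompact_closure_of_isClosedEmbedding (𝔖 := {K | IsCompact K})
    (fun _ hK => hK) ⟨isUniformEmbedding_toUniformOnFunIsCompact.isEmbedding, ?_⟩
    (fun K _ => hS.equicontinuousOn K) (fun _ _ x _ => hpt x)
  change IsClosed (range toUniformOnFunIsCompact)
  rw [range_toUniformOnFunIsCompact]
  exact UniformOnFun.isClosed_setOfPred_continuous CompactlyCoherentSpace.isCoherentWith

theorem exists_forall_abs_integral_lt {c : ℝ → ℝ} {T t₀ η : ℝ} (hc : IntegrableOn c (Icc 0 T))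
    (ht₀ : t₀ ∈ Icc 0 T) (hη : 0 < η) :
    ∃ a ∈ Icc 0 t₀, ∃ δ > 0, ∀ t ∈ Icc 0 T, dist t t₀ < δ →
      a ≤ t ∧ |∫ s in a..t, c s| < η := by
  have hT : 0 ≤ T := ht₀.1.trans ht₀.2
  have hci : ∀ u ∈ Icc 0 T, IntervalIntegrable c volume t₀ u := fun u hu =>
    (hc.mono_set (uIcc_subset_Icc ht₀ hu)).intervalIntegrable
  have hF : ContinuousWithinAt (fun b => ∫ s in t₀..b, c s) (Icc 0 T) t₀ := by
    have ht₀' : t₀ ∈ uIcc 0 T := by rwa [uIcc_of_le hT]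
    simpa only [uIcc_of_le hT] using intervalIntegral.continuousOn_primitive_interval'
      ((intervalIntegrable_iff_integrableOn_Icc_of_le hT).2 hc) ht₀' t₀ ht₀'
  obtain ⟨δ, hδ, hF⟩ := Metric.continuousWithinAt_iff.1 hF (η / 2) (half_pos hη)
  simp only [intervalIntegral.integral_same, Real.dist_eq, sub_zero] at hF
  set a := max (t₀ - δ / 2) 0
  have ha : a ∈ Icc 0 T := ⟨le_max_right _ _, max_le (by linarith [ht₀.2]) hT⟩
  have haδ : |a - t₀| < δ := by
    rw [abs_of_nonpos (sub_nonpos.2 (max_le (by linarith) ht₀.1))]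
    linarith [le_max_left (t₀ - δ / 2) 0]
  refine ⟨a, ⟨ha.1, max_le (by linarith) ht₀.1⟩, δ / 2, half_pos hδ, fun t ht htδ => ?_⟩
  rw [Real.dist_eq] at htδ
  refine ⟨max_le (by linarith [(abs_lt.1 htδ).1]) ht.1, ?_⟩
  rw [← intervalIntegral.integral_interval_sub_left (hci t ht) (hci a ha)]
  have hFt := hF ht (by linarith)
  have hFa := hF ha haδ
  calc |(∫ s in t₀..t, c s) - ∫ s in t₀..a, c s|
      ≤ |∫ s in t₀..t, c s| + |∫ s in t₀..a, c s| := abs_sub _ _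
    _ < η := by linarith

section EvolutionSystem

variable {T M a t t' : ℝ} {R : ℝ → ℝ → E →L[ℝ] E} {w : ℝ → E} {c : ℝ → ℝ}

theorem norm_integral_evol_apply_le (hM : ∀ p ∈ evolDomain T, ‖R p.1 p.2‖ ≤ M)
    (hc : IntegrableOn c (Icc 0 T)) (hdom : ∀ᵐ s ∂(volume.restrict (Icc 0 T)), ‖w s‖ ≤ c s)
    (ha : 0 ≤ a) (hat : a ≤ t) (htT : t ≤ T) :
    ‖∫ s in a..t, R t s (w s)‖ ≤ M * ∫ s in a..t, c s := by
  rw [← intervalIntegral.integral_const_mul]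
  have hct : IntervalIntegrable c volume a t :=
    (intervalIntegrable_iff_integrableOn_Icc_of_le hat).2 (hc.mono_set (Icc_subset_Icc ha htT))
  refine intervalIntegral.norm_integral_le_of_norm_le hat ?_ (hct.const_mul M)
  filter_upwards [(ae_restrict_iff' measurableSet_Icc).1 hdom] with s hs hsI
  have hRs : ‖R t s‖ ≤ M := hM (t, s) ⟨ha.trans hsI.1.le, hsI.2, htT⟩
  calc ‖R t s (w s)‖ ≤ ‖R t s‖ * ‖w s‖ := (R t s).le_opNorm _
    _ ≤ M * c s := mul_le_mul hRs (hs ⟨ha.trans hsI.1.le, hsI.2.trans htT⟩) (norm_nonneg _)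
        ((norm_nonneg _).trans hRs)

namespace IsEvolutionSystem

variable (hR : IsEvolutionSystem T R)
include hR

theorem exists_norm_le [CompleteSpace E] : ∃ M, ∀ p ∈ evolDomain T, ‖R p.1 p.2‖ ≤ M :=
  (isCompact_evolDomain T).exists_norm_le_of_continuousOn_apply hR.strong_cont

theorem intervalIntegrable_apply (hM : ∀ p ∈ evolDomain T, ‖R p.1 p.2‖ ≤ M)
    (hw : IntegrableOn w (Icc 0 T)) {b : ℝ} (ha : 0 ≤ a) (hab : a ≤ b) (hbt : b ≤ t)
    (htT : t ≤ T) : IntervalIntegrable (fun s => R t s (w s)) volume a b := by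
  have ht : 0 ≤ t := ha.trans (hab.trans hbt)
  have hmem : ∀ s ∈ Icc 0 t, (t, s) ∈ evolDomain T := fun s hs => ⟨hs.1, hs.2, htT⟩
  have hjoint : ContinuousOn (fun q : ℝ × E => R t q.1 q.2) (Icc 0 t ×ˢ univ) :=
    continuousOn_clm_apply_of_norm_le
      (fun y => (hR.strong_cont y).comp (Continuous.continuousOn (by fun_prop)) hmem)
      (fun s hs => hM _ (hmem s hs))
  have hwt : IntegrableOn w (Icc 0 t) := hw.mono_set (Icc_subset_Icc le_rfl htT)
  -- clamping `s` to `[0, t]` makes the integrand a continuous function of `(s, w s)`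
  have hclamp : Continuous fun q : ℝ × E => R t (projIcc 0 t ht q.1) q.2 :=
    hjoint.comp_continuous (f := fun q : ℝ × E => ((projIcc 0 t ht q.1 : ℝ), q.2))
      (by fun_prop) fun q => ⟨(projIcc 0 t ht q.1).2, mem_univ _⟩
  have hmeas : AEStronglyMeasurable (fun s => R t s (w s)) (volume.restrict (Icc 0 t)) := by
    refine (hclamp.comp_aestronglyMeasurable
      (aestronglyMeasurable_id.prodMk hwt.aestronglyMeasurable)).congr ?_
    filter_upwards [ae_restrict_mem measurableSet_Icc] with s hs
    simp [projIcc_of_mem ht hs]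
  have hint : IntegrableOn (fun s => R t s (w s)) (Icc 0 t) := by
    refine (hwt.norm.const_mul M).mono' hmeas ?_
    filter_upwards [ae_restrict_mem measurableSet_Icc] with s hs
    exact (R t s).le_of_opNorm_le (hM _ (hmem s hs)) _
  exact (hint.mono_set (by rw [uIcc_of_le hab]; exact Icc_subset_Icc ha hbt)).intervalIntegrable

theorem evolMap_eq_add_integral [CompleteSpace E] (hM : ∀ p ∈ evolDomain T, ‖R p.1 p.2‖ ≤ M)
    (hw : IntegrableOn w (Icc 0 T)) (x : E) (ha : 0 ≤ a) (hat : a ≤ t) (htT : t ≤ T) :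
    evolMap R x w t = R t a (evolMap R x w a) + ∫ s in a..t, R t s (w s) := by
  have hint : R t a (∫ s in (0 : ℝ)..a, R a s (w s)) = ∫ s in (0 : ℝ)..a, R t s (w s) := by
    rw [← (R t a).intervalIntegral_comp_comm
      (hR.intervalIntegrable_apply hM hw le_rfl ha le_rfl (hat.trans htT))]
    refine intervalIntegral.integral_congr fun s hs => ?_
    rw [uIcc_of_le ha] at hs
    simp only [hR.comp hs.1 hs.2 hat htT, ContinuousLinearMap.comp_apply]
  rw [evolMap, evolMap, map_add, hR.comp le_rfl ha hat htT, ContinuousLinearMap.comp_apply, hint,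
    add_assoc, intervalIntegral.integral_add_adjacent_intervals
      (hR.intervalIntegrable_apply hM hw le_rfl ha hat htT)
      (hR.intervalIntegrable_apply hM hw ha hat le_rfl htT)]

theorem norm_evolMap_sub_le [CompleteSpace E] (hM : ∀ p ∈ evolDomain T, ‖R p.1 p.2‖ ≤ M)
    (hw : IntegrableOn w (Icc 0 T)) (hc : IntegrableOn c (Icc 0 T))
    (hdom : ∀ᵐ s ∂(volume.restrict (Icc 0 T)), ‖w s‖ ≤ c s) (x : E) (ha : 0 ≤ a)
    (hat : a ≤ t) (hat' : a ≤ t') (htT : t ≤ T) (ht'T : t' ≤ T) :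
    ‖evolMap R x w t - evolMap R x w t'‖ ≤
      ‖R t a (evolMap R x w a) - R t' a (evolMap R x w a)‖ +
        (M * (∫ s in a..t, c s) + M * ∫ s in a..t', c s) := by
  rw [hR.evolMap_eq_add_integral hM hw x ha hat htT,
    hR.evolMap_eq_add_integral hM hw x ha hat' ht'T, add_sub_add_comm]
  exact (norm_add_le _ _).trans (add_le_add le_rfl ((norm_sub_le _ _).trans (add_le_add
    (norm_integral_evol_apply_le hM hc hdom ha hat htT)
    (norm_integral_evol_apply_le hM hc hdom ha hat' ht'T))))

end IsEvolutionSystem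

end EvolutionSystem

theorem equicontinuousOn_evolMap {ι : Type*} [CompleteSpace E] {T M : ℝ} {c : ℝ → ℝ}
    {R : ι → ℝ → ℝ → E →L[ℝ] E}
    (hR : ∀ i, IsEvolutionSystem T (R i)) (hM : ∀ i, ∀ p ∈ evolDomain T, ‖R i p.1 p.2‖ ≤ M)
    (hmod : ∀ Q : Set E, IsCompact Q → ∀ ε > 0, ∃ δ > 0, ∀ i, ∀ p ∈ evolDomain T,
      ∀ q ∈ evolDomain T, dist p q < δ → ∀ y ∈ Q, dist (R i p.1 p.2 y) (R i q.1 q.2 y) < ε)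
    {x : ι → E} {w : ι → ℝ → E} (hw : ∀ i, IntegrableOn (w i) (Icc 0 T))
    (hc : IntegrableOn c (Icc 0 T))
    (hdom : ∀ i, ∀ᵐ s ∂(volume.restrict (Icc 0 T)), ‖w i s‖ ≤ c s)
    (hpt : ∀ a ∈ Icc 0 T, ∃ Q, IsCompact Q ∧ ∀ i, evolMap (R i) (x i) (w i) a ∈ Q) :
    EquicontinuousOn (fun i => evolMap (R i) (x i) (w i)) (Icc 0 T) := by
  intro t₀ ht₀
  rw [Metric.uniformity_basis_dist.equicontinuousWithinAt_iff_right]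
  intro ε hε
  set η := ε / (4 * (|M| + 1))
  have hMη : ∀ I : ℝ, |I| < η → M * I ≤ ε / 4 := fun I hI =>
    calc M * I ≤ |M| * |I| := (le_abs_self _).trans (abs_mul M I).le
      _ ≤ |M| * η := by gcongr
      _ ≤ ε / 4 := by
        rw [mul_div_assoc', div_le_div_iff₀ (by positivity) (by norm_num)]
        nlinarith [abs_nonneg M]
  -- every `t` near `t₀` is reached from a common earlier time `a`, at which the values
  -- lie in one compact set
  obtain ⟨a, ⟨ha, hat₀⟩, δ₁, hδ₁, hanchor⟩ :=
    exists_forall_abs_integral_lt hc ht₀ (by positivity : 0 < η)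
  obtain ⟨Q, hQ, hxQ⟩ := hpt a ⟨ha, hat₀.trans ht₀.2⟩
  obtain ⟨δ₂, hδ₂, hmodQ⟩ := hmod Q hQ (ε / 2) (half_pos hε)
  filter_upwards [inter_mem_nhdsWithin (Icc 0 T) (Metric.ball_mem_nhds t₀ (lt_min hδ₁ hδ₂))]
    with t ⟨ht, htδ⟩ i
  rw [Metric.mem_ball] at htδ
  obtain ⟨hat, hIt⟩ := hanchor t ht (htδ.trans_le (min_le_left _ _))
  obtain ⟨-, hIt₀⟩ := hanchor t₀ ht₀ (by simpa using hδ₁)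
  have hRa : dist (R i t₀ a (evolMap (R i) (x i) (w i) a)) (R i t a (evolMap (R i) (x i) (w i) a))
      < ε / 2 := by
    refine hmodQ i (t₀, a) ⟨ha, hat₀, ht₀.2⟩ (t, a) ⟨ha, hat, ht.2⟩ ?_ _ (hxQ i)
    simpa [Prod.dist_eq, dist_comm] using (htδ.trans_le (min_le_right _ _))
  rw [dist_eq_norm]
  calc _ ≤ _ := (hR i).norm_evolMap_sub_le (hM i) (hw i) hc (hdom i) (x i) ha hat₀ hat ht₀.2 ht.2
    _ < ε / 2 + (ε / 4 + ε / 4) := by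
        rw [← dist_eq_norm]
        exact add_lt_add_of_lt_of_le hRa (add_le_add (hMη _ hIt₀) (hMη _ hIt))
    _ = ε := by ring

theorem IsEvolutionSystem.continuousOn_evolMap [CompleteSpace E] {T : ℝ} {R : ℝ → ℝ → E →L[ℝ] E}
    (hR : IsEvolutionSystem T R) {w : ℝ → E} (hw : IntegrableOn w (Icc 0 T)) (x : E) :
    ContinuousOn (evolMap R x w) (Icc 0 T) := by
  obtain ⟨M, hM⟩ := hR.exists_norm_le
  have hequi := equicontinuousOn_evolMap (ι := Unit) (fun _ => hR) (fun _ => hM)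
    (fun Q hQ ε hε => ((isCompact_evolDomain T).exists_forall_dist_clm_apply_lt hR.strong_cont
      hM hQ hε).imp fun δ ⟨hδ, h⟩ => ⟨hδ, fun _ => h⟩)
    (fun _ => hw) hw.norm (fun _ => .of_forall fun _ => le_rfl)
    (fun a _ => ⟨{evolMap R x w a}, isCompact_singleton, fun _ => rfl⟩)
  exact fun t ht => (hequi t ht).continuousWithinAt ()

namespace IsContinuousEvolFamily

variable {T : ℝ} {R : ℝ → ℝ → ℝ → E →L[ℝ] E}

theorem continuousOn_apply (hES : ∀ lam ∈ Icc (0 : ℝ) 1, IsEvolutionSystem T (R lam))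
    (hcont : IsContinuousEvolFamily T R) (y : E) :
    ContinuousOn (fun q : ℝ × (ℝ × ℝ) => R q.1 q.2.1 q.2.2 y) (Icc 0 1 ×ˢ evolDomain T) := by
  rintro ⟨lam₀, p₀⟩ ⟨hlam₀, hp₀⟩
  refine tendsto_of_seq_tendsto fun u hu => ?_
  obtain ⟨hu, hmem⟩ := tendsto_nhdsWithin_iff.1 hu
  obtain ⟨N, hN⟩ := hmem.exists_forall_of_atTop
  rw [← tendsto_add_atTop_iff_nat N]
  have hshift : Tendsto (fun n => u (n + N)) atTop (𝓝 (lam₀, p₀)) :=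
    hu.comp (tendsto_add_atTop_nat N)
  exact (hcont y (fun n => (u (n + N)).1) lam₀ (fun n => (hN _ (by omega)).1) hlam₀
    ((continuous_fst.tendsto _).comp hshift)).tendsto_comp ((hES lam₀ hlam₀).strong_cont y p₀ hp₀)
    (tendsto_nhdsWithin_iff.2 ⟨(continuous_snd.tendsto _).comp hshift,
      .of_forall fun n => (hN _ (by omega)).2⟩)

theorem exists_norm_le [CompleteSpace E]
    (hES : ∀ lam ∈ Icc (0 : ℝ) 1, IsEvolutionSystem T (R lam))
    (hcont : IsContinuousEvolFamily T R) :
    ∃ M, ∀ lam ∈ Icc (0 : ℝ) 1, ∀ p ∈ evolDomain T, ‖R lam p.1 p.2‖ ≤ M :=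
  ((isCompact_Icc.prod (isCompact_evolDomain T)).exists_norm_le_of_continuousOn_apply
    (hcont.continuousOn_apply hES)).imp fun _ hM lam hlam p hp => hM (lam, p) ⟨hlam, hp⟩

theorem exists_forall_dist_apply_lt (hES : ∀ lam ∈ Icc (0 : ℝ) 1, IsEvolutionSystem T (R lam))
    (hcont : IsContinuousEvolFamily T R) {M : ℝ}
    (hM : ∀ lam ∈ Icc (0 : ℝ) 1, ∀ p ∈ evolDomain T, ‖R lam p.1 p.2‖ ≤ M) {Q : Set E}
    (hQ : IsCompact Q) {ε : ℝ} (hε : 0 < ε) :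
    ∃ δ > 0, ∀ lam ∈ Icc (0 : ℝ) 1, ∀ p ∈ evolDomain T, ∀ q ∈ evolDomain T, dist p q < δ →
      ∀ y ∈ Q, dist (R lam p.1 p.2 y) (R lam q.1 q.2 y) < ε := by
  obtain ⟨δ, hδ, h⟩ := (isCompact_Icc.prod (isCompact_evolDomain T)).exists_forall_dist_clm_apply_lt
    (hcont.continuousOn_apply hES) (fun q hq => hM q.1 hq.1 q.2 hq.2) hQ hε
  exact ⟨δ, hδ, fun lam hlam p hp q hq hpq => h (lam, p) ⟨hlam, hp⟩ (lam, q) ⟨hlam, hq⟩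
    (by simpa [Prod.dist_eq] using hpq)⟩

end IsContinuousEvolFamily

theorem statement_4_general
    {E : Type*} [NormedAddCommGroup E] [NormedSpace ℝ E] [CompleteSpace E]
    (T : ℝ)
    (R : ℝ → ℝ → ℝ → E →L[ℝ] E)
    (hES : ∀ lam ∈ Icc (0 : ℝ) 1, IsEvolutionSystem T (R lam))
    (hcont : IsContinuousEvolFamily T R)
    (K : Set E)
    (W : Set (ℝ → E))
    (hWint : ∀ w ∈ W, IntegrableOn w (Icc (0 : ℝ) T))
    (c : ℝ → ℝ) (hc : IntegrableOn c (Icc (0 : ℝ) T))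
    (hdom : ∀ w ∈ W, ∀ᵐ t ∂(volume.restrict (Icc (0 : ℝ) T)), ‖w t‖ ≤ c t) :
    IsCompact (closure {u : C(Icc (0 : ℝ) T, E) |
        ∃ x ∈ K, ∃ w ∈ W, ∃ lam ∈ Icc (0 : ℝ) 1,
          ∀ t : Icc (0 : ℝ) T, u t = evolMap (R lam) x w ↑t}) ↔
      ∀ t ∈ Icc (0 : ℝ) T, IsCompact (closure {y : E |
        ∃ x ∈ K, ∃ w ∈ W, ∃ lam ∈ Icc (0 : ℝ) 1, y = evolMap (R lam) x w t}) := by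
  set S := {u : C(Icc (0 : ℝ) T, E) | ∃ x ∈ K, ∃ w ∈ W, ∃ lam ∈ Icc (0 : ℝ) 1,
    ∀ t : Icc (0 : ℝ) T, u t = evolMap (R lam) x w ↑t}
  constructor
  · intro hS t ht
    refine (hS.image (continuous_eval_const (⟨t, ht⟩ : Icc (0 : ℝ) T))).closure_of_subset ?_
    rintro _ ⟨x, hx, w, hw, lam, hlam, rfl⟩
    exact ⟨⟨_, ((hES lam hlam).continuousOn_evolMap (hWint w hw) x).domRestrict⟩,
      subset_closure ⟨x, hx, w, hw, lam, hlam, fun _ => rfl⟩, rfl⟩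
  · intro hpt
    obtain ⟨M, hM⟩ := hcont.exists_norm_le hES
    choose x hx w hw lam hlam hu using fun u : S => u.2
    have hequi := equicontinuousOn_evolMap (fun u => hES _ (hlam u)) (fun u => hM _ (hlam u))
      (fun Q hQ ε hε => (hcont.exists_forall_dist_apply_lt hES hM hQ hε).imp
        fun δ ⟨hδ, h⟩ => ⟨hδ, fun u => h _ (hlam u)⟩)
      (fun u => hWint _ (hw u)) hc (fun u => hdom _ (hw u))
      (fun a ha => ⟨_, hpt a ha, fun u => subset_closure ⟨_, hx u, _, hw u, _, hlam u, rfl⟩⟩)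
    rw [← equicontinuous_restrict_iff] at hequi
    refine ContinuousMap.isCompact_closure_of_equicontinuous ?_ fun t => ⟨_, hpt t t.2, ?_⟩
    · convert hequi using 1
      funext u t
      exact hu u t
    · rintro u ⟨x, hx, w, hw, lam, hlam, hu⟩
      exact subset_closure ⟨x, hx, w, hw, lam, hlam, hu t⟩

/-- Proposition 1(ii): with `K ⊆ E` relatively compact and
`W ⊆ L¹([0,T],E)` uniformly dominated by an integrable function `c`, the set
`Σ(K × W × [0,1])` is relatively compact in `C([0,T],E)` if and only if for every
`t ∈ [0,T]` the set `{u(t) : u ∈ Σ(K × W × [0,1])}` is relatively compact in `E`. -/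
theorem statement_4
    {E : Type*} [NormedAddCommGroup E] [NormedSpace ℝ E] [CompleteSpace E]
    (T : ℝ) (hT : 0 < T)
    (R : ℝ → ℝ → ℝ → E →L[ℝ] E)
    (hES : ∀ lam ∈ Icc (0 : ℝ) 1, IsEvolutionSystem T (R lam))
    (hcont : IsContinuousEvolFamily T R)
    (K : Set E) (hK : IsCompact (closure K))
    (W : Set (ℝ → E))
    (hWint : ∀ w ∈ W, IntegrableOn w (Icc (0 : ℝ) T))
    (c : ℝ → ℝ) (hc : IntegrableOn c (Icc (0 : ℝ) T))
    (hdom : ∀ w ∈ W, ∀ᵐ t ∂(volume.restrict (Icc (0 : ℝ) T)), ‖w t‖ ≤ c t) :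
    IsCompact (closure {u : C(Icc (0 : ℝ) T, E) |
        ∃ x ∈ K, ∃ w ∈ W, ∃ lam ∈ Icc (0 : ℝ) 1,
          ∀ t : Icc (0 : ℝ) T, u t = evolMap (R lam) x w ↑t}) ↔
      ∀ t ∈ Icc (0 : ℝ) T, IsCompact (closure {y : E |
        ∃ x ∈ K, ∃ w ∈ W, ∃ lam ∈ Icc (0 : ℝ) 1, y = evolMap (R lam) x w t}) :=
  statement_4_general T R hES hcont K W hWint c hc hdom

end
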